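/- There is a function h : ℕ × ℕ → ℕ with the following property. Let χ : [ℕ]² → C be a 2-bounded coloring, A ⊆ ℕ a set normal for χ, and I an ideal on ℕ. Let X ⊆ A be polychromatic with |X| ≤ p and A ∩ E(X) ∉ I, and let Z ⊆ A ∩ E(X) with |Z| ≥ h(p, n). Then there is Y ⊆ Z with |Y| ≥ n such that X ∪ Y is polychromatic and A ∩ E(X ∪ Y) ∉ I. -/
import Mathlib

universe u

/-- `Y` is polychromatic for the coloring `χ`, given as a function on ordered pairs `a < b`. -/
def Polychromatic {C : Type u} (χ : ℕ → ℕ → C) (Y : Set ℕ) : Prop :=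
  ∀ a b c d : ℕ, a ∈ Y → b ∈ Y → c ∈ Y → d ∈ Y → a < b → c < d →
    χ a b = χ c d → a = c ∧ b = d

/-- `χ` is 2-bounded: every color is received by at most two pairs. -/
def TwoBounded {C : Type u} (χ : ℕ → ℕ → C) : Prop :=
  ∀ c : C, {p : ℕ × ℕ | p.1 < p.2 ∧ χ p.1 p.2 = c}.encard ≤ 2

/-- `A` is normal for `χ`: pairs from `A` with the same color have the same top element. -/
def NormalFor {C : Type u} (χ : ℕ → ℕ → C) (A : Set ℕ) : Prop :=
  ∀ a₀ a₁ b₀ b₁ : ℕ, a₀ ∈ A → a₁ ∈ A → b₀ ∈ A → b₁ ∈ A →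
    a₀ < a₁ → b₀ < b₁ → χ a₀ a₁ = χ b₀ b₁ → a₁ = b₁

/-- `EXT χ X` is the set `E(X)` of points extending the finite polychromatic set `X`
to a polychromatic set. -/
def EXT {C : Type u} (χ : ℕ → ℕ → C) (X : Finset ℕ) : Set ℕ :=
  {a | a ∉ X ∧ Polychromatic χ (↑X ∪ {a})}

/-- `I` is an ideal on `ℕ`. -/
def IsIdeal (I : Set (Set ℕ)) : Prop :=
  (∀ s : Set ℕ, s.Finite → s ∈ I) ∧ (∀ s t : Set ℕ, s ⊆ t → t ∈ I → s ∈ I) ∧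
  (∀ s t : Set ℕ, s ∈ I → t ∈ I → s ∪ t ∈ I) ∧ Set.univ ∉ I

section Aux

variable {C : Type u}

/-- The set of common upper "conflict" points of `u` and `v`. -/
def Dset (χ : ℕ → ℕ → C) (u v : ℕ) : Set ℕ := {a | u < a ∧ v < a ∧ χ u a = χ v a}

/-- No same-top conflicts in `S`. -/
def NoConf (χ : ℕ → ℕ → C) (S : Set ℕ) : Prop :=
  ∀ a c b : ℕ, a ∈ S → c ∈ S → b ∈ S → a < b → c < b → χ a b = χ c b → a = c

theorem noConf_mono {χ : ℕ → ℕ → C} {S T : Set ℕ} (hST : S ⊆ T) (h : NoConf χ T) :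
    NoConf χ S :=
  fun a c b ha hc hb => h a c b (hST ha) (hST hc) (hST hb)

theorem poly_noConf {χ : ℕ → ℕ → C} {S : Set ℕ} (h : Polychromatic χ S) : NoConf χ S :=
  fun a c b ha hc hb hab hcb he => (h a b c b ha hb hc hb hab hcb he).1

theorem noConf_poly {χ : ℕ → ℕ → C} {A S : Set ℕ} (hA : NormalFor χ A) (hS : S ⊆ A)
    (h : NoConf χ S) : Polychromatic χ S := by
  intro a b c d ha hb hc hd hab hcd he
  have hbd : b = d := hA a b c d (hS ha) (hS hb) (hS hc) (hS hd) hab hcd he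
  subst hbd
  exact ⟨h a c b ha hc hb hab hcd he, rfl⟩

theorem three_pairs {χ : ℕ → ℕ → C} (hχ : TwoBounded χ) {a b c t : ℕ}
    (hab : a ≠ b) (hac : a ≠ c) (hbc : b ≠ c) (ha : a < t) (hb : b < t) (hc : c < t)
    (h1 : χ b t = χ a t) (h2 : χ c t = χ a t) : False := by
  have hsub : ({(a,t),(b,t),(c,t)} : Set (ℕ×ℕ)) ⊆ {p : ℕ×ℕ | p.1 < p.2 ∧ χ p.1 p.2 = χ a t} := by
    rintro p (rfl | rfl | rfl) <;> simp_all
  have h3 : ({(a,t),(b,t),(c,t)} : Set (ℕ×ℕ)).encard = 3 := by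
    rw [Set.encard_insert_of_notMem (by simp [hab, hac]), Set.encard_pair (by simp [hbc])]; rfl
  have hle := (h3 ▸ Set.encard_le_encard hsub).trans (hχ (χ a t))
  norm_num at hle

open Classical in
theorem exists_small_D {χ : ℕ → ℕ → C} (hχ : TwoBounded χ) (S W : Finset ℕ)
    (hW : W.Nonempty) (hdisj : ∀ w ∈ W, w ∉ S) :
    ∃ y ∈ W, (∑ u ∈ S, (W.filter (fun w => w ∈ Dset χ u y)).card) ≤ S.card := by
  classical
  by_contra hcon
  push_neg at hcon
  have hrow : ∀ u ∈ S, ∑ y ∈ W, (W.filter (fun w => w ∈ Dset χ u y)).card ≤ W.card := by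
    intro u hu
    have hdis : ∀ y₁ ∈ W, ∀ y₂ ∈ W, y₁ ≠ y₂ →
        Disjoint (W.filter (fun w => w ∈ Dset χ u y₁)) (W.filter (fun w => w ∈ Dset χ u y₂)) := by
      intro y₁ hy₁ y₂ hy₂ hne
      refine Finset.disjoint_left.mpr ?_
      intro w hw₁ hw₂
      obtain ⟨-, hu1, hl1, he1⟩ := Finset.mem_filter.mp hw₁
      obtain ⟨-, -, hl2, he2⟩ := Finset.mem_filter.mp hw₂
      refine three_pairs hχ (a := u) (b := y₁) (c := y₂) ?_ ?_ hne hu1 hl1 hl2 he1.symm he2.symm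
      · intro h; subst h; exact hdisj _ hy₁ hu
      · intro h; subst h; exact hdisj _ hy₂ hu
    calc ∑ y ∈ W, (W.filter (fun w => w ∈ Dset χ u y)).card
        = (W.biUnion (fun y => W.filter (fun w => w ∈ Dset χ u y))).card :=
          (Finset.card_biUnion hdis).symm
      _ ≤ W.card := Finset.card_le_card
          (Finset.biUnion_subset.mpr fun y _ => Finset.filter_subset _ _)
  have htot : ∑ y ∈ W, ∑ u ∈ S, (W.filter (fun w => w ∈ Dset χ u y)).card ≤ S.card * W.card := by
    rw [Finset.sum_comm]
    calc ∑ u ∈ S, ∑ y ∈ W, (W.filter (fun w => w ∈ Dset χ u y)).card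
        ≤ ∑ u ∈ S, W.card := Finset.sum_le_sum hrow
      _ = S.card * W.card := by rw [Finset.sum_const, smul_eq_mul]
  have hlow : W.card * (S.card + 1) ≤
      ∑ y ∈ W, ∑ u ∈ S, (W.filter (fun w => w ∈ Dset χ u y)).card := by
    calc W.card * (S.card + 1) = ∑ _y ∈ W, (S.card + 1) := by rw [Finset.sum_const, smul_eq_mul]
      _ ≤ _ := Finset.sum_le_sum fun y hy => hcon y hy
  have hpos := hW.card_pos
  nlinarith

theorem ideal_biUnion {I : Set (Set ℕ)} (hI : IsIdeal I) (s : Finset ℕ) (f : ℕ → Set ℕ)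
    (h : ∀ i ∈ s, f i ∈ I) : (⋃ i ∈ (↑s : Set ℕ), f i) ∈ I := by
  classical
  induction s using Finset.induction with
  | empty => simpa using hI.1 ∅ Set.finite_empty
  | @insert x s hx ih =>
    rw [Finset.coe_insert, Set.biUnion_insert]
    exact hI.2.2.1 _ _ (h _ (Finset.mem_insert_self _ _))
      (ih fun i hi => h i (Finset.mem_insert_of_mem hi))

/-- Phase 1: extracting a polychromatic-compatible subset of prescribed size. -/
theorem phase1 {χ : ℕ → ℕ → C} (hχ : TwoBounded χ) (X Z : Finset ℕ) (p m : ℕ)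
    (hXp : X.card ≤ p) (hXnc : NoConf χ ↑X)
    (hZ : ∀ z ∈ Z, z ∉ X ∧ NoConf χ (↑X ∪ {z}))
    (hZcard : m * (3 * (p + m) + 1) + 1 ≤ Z.card) :
    ∃ Y' : Finset ℕ, Y' ⊆ Z ∧ Y'.card = m ∧ NoConf χ ↑(X ∪ Y') := by
  classical
  set a := 3 * (p + m) + 1 with ha
  have key : ∀ j, j ≤ m → ∃ Yj Wj : Finset ℕ, Yj ⊆ Z ∧ Yj.card = j ∧ Wj ⊆ Z ∧
      (∀ w ∈ Wj, w ∉ X ∪ Yj) ∧ NoConf χ ↑(X ∪ Yj) ∧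
      (∀ w ∈ Wj, NoConf χ (↑(X ∪ Yj) ∪ {w})) ∧ Z.card ≤ Wj.card + j * a := by
    intro j
    induction j with
    | zero =>
      intro _
      refine ⟨∅, Z, Finset.empty_subset _, rfl, le_refl _, ?_, ?_, ?_, by simp⟩
      · intro w hw; simp [Finset.union_empty, (hZ w hw).1]
      · simpa [Finset.union_empty] using hXnc
      · intro w hw; simpa [Finset.union_empty] using (hZ w hw).2
    | succ j ih =>
      intro hj1
      obtain ⟨Yj, Wj, hYZ, hYc, hWZ, hWdisj, hnc, hext, hcard⟩ := ih (Nat.le_of_succ_le hj1)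
      have hSj : (X ∪ Yj).card ≤ p + j :=
        le_trans (Finset.card_union_le _ _) (by omega)
      have hja : j * a + a ≤ m * a := by
        have : (j + 1) * a ≤ m * a := Nat.mul_le_mul_right a hj1
        nlinarith
      have hWne : Wj.Nonempty := by
        rw [← Finset.card_pos]; omega
      obtain ⟨y, hyW, hyD⟩ := exists_small_D hχ (X ∪ Yj) Wj hWne hWdisj
      have hyS : y ∉ X ∪ Yj := hWdisj y hyW
      set B1 := Wj.filter (fun w => ∃ u ∈ X ∪ Yj, w ∈ Dset χ u y) with hB1def
      set B2 := Wj.filter (fun w => ∃ c ∈ X ∪ Yj, y < c ∧ w < c ∧ w ≠ y ∧ χ w c = χ y c)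
        with hB2def
      set B3 := Wj.filter (fun w => ∃ v ∈ X ∪ Yj, v < y ∧ w < y ∧ χ w y = χ v y) with hB3def
      have hB1 : B1.card ≤ p + j := by
        calc B1.card ≤ ((X ∪ Yj).biUnion (fun u => Wj.filter (fun w => w ∈ Dset χ u y))).card := by
              apply Finset.card_le_card
              intro w hw
              obtain ⟨hwW, u, hu, hwD⟩ := Finset.mem_filter.mp hw
              exact Finset.mem_biUnion.mpr ⟨u, hu, Finset.mem_filter.mpr ⟨hwW, hwD⟩⟩
          _ ≤ ∑ u ∈ X ∪ Yj, (Wj.filter (fun w => w ∈ Dset χ u y)).card :=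
              Finset.card_biUnion_le
          _ ≤ (X ∪ Yj).card := hyD
          _ ≤ p + j := hSj
      have hB2 : B2.card ≤ p + j := by
        calc B2.card ≤ ((X ∪ Yj).biUnion (fun c =>
                Wj.filter (fun w => y < c ∧ w < c ∧ w ≠ y ∧ χ w c = χ y c))).card := by
              apply Finset.card_le_card
              intro w hw
              obtain ⟨hwW, c, hc, hrest⟩ := Finset.mem_filter.mp hw
              exact Finset.mem_biUnion.mpr ⟨c, hc, Finset.mem_filter.mpr ⟨hwW, hrest⟩⟩
          _ ≤ ∑ c ∈ X ∪ Yj, (Wj.filter (fun w => y < c ∧ w < c ∧ w ≠ y ∧ χ w c = χ y c)).card :=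
              Finset.card_biUnion_le
          _ ≤ ∑ _c ∈ X ∪ Yj, 1 := by
              apply Finset.sum_le_sum
              intro c hc
              apply Finset.card_le_one.mpr
              intro w₁ hw₁ w₂ hw₂
              obtain ⟨-, hyc, h1c, h1y, he1⟩ := Finset.mem_filter.mp hw₁
              obtain ⟨-, -, h2c, h2y, he2⟩ := Finset.mem_filter.mp hw₂
              by_contra hne
              exact three_pairs hχ (fun h => h1y h.symm) (fun h => h2y h.symm) hne hyc h1c h2c
                he1 he2
          _ = (X ∪ Yj).card := by simp
          _ ≤ p + j := hSj
      have hB3 : B3.card ≤ p + j := by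
        calc B3.card ≤ ((X ∪ Yj).biUnion (fun v =>
                Wj.filter (fun w => v < y ∧ w < y ∧ χ w y = χ v y))).card := by
              apply Finset.card_le_card
              intro w hw
              obtain ⟨hwW, v, hv, hrest⟩ := Finset.mem_filter.mp hw
              exact Finset.mem_biUnion.mpr ⟨v, hv, Finset.mem_filter.mpr ⟨hwW, hrest⟩⟩
          _ ≤ ∑ v ∈ X ∪ Yj, (Wj.filter (fun w => v < y ∧ w < y ∧ χ w y = χ v y)).card :=
              Finset.card_biUnion_le
          _ ≤ ∑ _v ∈ X ∪ Yj, 1 := by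
              apply Finset.sum_le_sum
              intro v hv
              apply Finset.card_le_one.mpr
              intro w₁ hw₁ w₂ hw₂
              obtain ⟨h1W, hvy, h1y, he1⟩ := Finset.mem_filter.mp hw₁
              obtain ⟨h2W, -, h2y, he2⟩ := Finset.mem_filter.mp hw₂
              by_contra hne
              refine three_pairs hχ (a := v) (b := w₁) (c := w₂) ?_ ?_ hne hvy h1y h2y he1 he2
              · intro h; subst h; exact hWdisj _ h1W hv
              · intro h; subst h; exact hWdisj _ h2W hv
          _ = (X ∪ Yj).card := by simp
          _ ≤ p + j := hSj
      set Wn := (Wj \ (B1 ∪ B2 ∪ B3)).erase y with hWndef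
      have hWnW : Wn ⊆ Wj := (Finset.erase_subset _ _).trans (Finset.sdiff_subset)
      have hWnprop : ∀ w ∈ Wn, w ∈ Wj ∧ w ≠ y ∧ w ∉ B1 ∧ w ∉ B2 ∧ w ∉ B3 := by
        intro w hw
        obtain ⟨hwy, hw'⟩ := Finset.mem_erase.mp hw
        obtain ⟨hwW, hwB⟩ := Finset.mem_sdiff.mp hw'
        simp only [Finset.mem_union, not_or] at hwB
        exact ⟨hwW, hwy, hwB.1.1, hwB.1.2, hwB.2⟩
      have hyYj : y ∉ Yj := fun h => hyS (Finset.mem_union_right _ h)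
      refine ⟨insert y Yj, Wn, ?_, ?_, hWnW.trans hWZ, ?_, ?_, ?_, ?_⟩
      · exact Finset.insert_subset (hWZ hyW) hYZ
      · rw [Finset.card_insert_of_notMem hyYj, hYc]
      · -- disjointness
        intro w hw
        obtain ⟨hwW, hwy, -, -, -⟩ := hWnprop w hw
        rw [Finset.union_insert, Finset.mem_insert]
        push_neg
        exact ⟨hwy, hWdisj w (hWnW hw)⟩
      · -- NoConf of new chosen set
        have := hext y hyW
        rw [Finset.union_insert, Finset.coe_insert, ← Set.union_singleton]
        exact this
      · -- extension invariant
        intro w hw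
        obtain ⟨hwW, hwy, hnB1, hnB2, hnB3⟩ := hWnprop w hw
        have hwS : w ∉ X ∪ Yj := hWdisj w hwW
        have H1 : NoConf χ (↑(X ∪ Yj) ∪ {w}) := hext w hwW
        have H2 : NoConf χ (↑(X ∪ Yj) ∪ {y}) := hext y hyW
        rw [Finset.union_insert, Finset.coe_insert]
        intro α γ β hα hγ hβ hαβ hγβ heq
        simp only [Set.mem_union, Set.mem_insert_iff, Set.mem_singleton_iff,
          Finset.mem_coe] at hα hγ hβ
        rcases hβ with (rfl | hβ) | rfl
        · -- β = y
          rcases hα with (rfl | hα) | rfl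
          · exact absurd hαβ (lt_irrefl _)
          · rcases hγ with (rfl | hγ) | rfl
            · exact absurd hγβ (lt_irrefl _)
            · exact H2 α γ β (Or.inl hα) (Or.inl hγ) (Or.inr rfl) hαβ hγβ heq
            · exact absurd (Finset.mem_filter.mpr ⟨hwW, α, hα, hαβ, hγβ, heq.symm⟩) hnB3
          · rcases hγ with (rfl | hγ) | rfl
            · exact absurd hγβ (lt_irrefl _)
            · exact absurd (Finset.mem_filter.mpr ⟨hwW, γ, hγ, hγβ, hαβ, heq⟩) hnB3
            · rfl
        · -- β ∈ X ∪ Yj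
          rcases hα with (rfl | hα) | rfl
          · rcases hγ with (rfl | hγ) | rfl
            · rfl
            · exact H2 α γ β (Or.inr rfl) (Or.inl hγ) (Or.inl hβ) hαβ hγβ heq
            · exact absurd (Finset.mem_filter.mpr ⟨hwW, β, hβ, hαβ, hγβ, hwy, heq.symm⟩) hnB2
          · rcases hγ with (rfl | hγ) | rfl
            · exact H2 α γ β (Or.inl hα) (Or.inr rfl) (Or.inl hβ) hαβ hγβ heq
            · exact hnc α γ β hα hγ hβ hαβ hγβ heq
            · exact H1 α γ β (Or.inl hα) (Or.inr rfl) (Or.inl hβ) hαβ hγβ heq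
          · rcases hγ with (rfl | hγ) | rfl
            · exact absurd (Finset.mem_filter.mpr ⟨hwW, β, hβ, hγβ, hαβ, hwy, heq⟩) hnB2
            · exact H1 α γ β (Or.inr rfl) (Or.inl hγ) (Or.inl hβ) hαβ hγβ heq
            · rfl
        · -- β = w
          rcases hα with (rfl | hα) | rfl
          · rcases hγ with (rfl | hγ) | rfl
            · rfl
            · exact absurd (Finset.mem_filter.mpr ⟨hwW, γ, hγ, hγβ, hαβ, heq.symm⟩) hnB1
            · exact absurd hγβ (lt_irrefl _)
          · rcases hγ with (rfl | hγ) | rfl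
            · exact absurd (Finset.mem_filter.mpr ⟨hwW, α, hα, hαβ, hγβ, heq⟩) hnB1
            · exact H1 α γ β (Or.inl hα) (Or.inl hγ) (Or.inr rfl) hαβ hγβ heq
            · exact absurd hγβ (lt_irrefl _)
          · exact absurd hαβ (lt_irrefl _)
      · -- cardinality bookkeeping
        have hsplit : Wj.card ≤ Wn.card + (3 * (p + j) + 1) := by
          have h1 : Wj \ (B1 ∪ B2 ∪ B3) ⊆ insert y Wn := by
            intro z hz
            by_cases hzy : z = y
            · exact hzy ▸ Finset.mem_insert_self _ _
            · exact Finset.mem_insert_of_mem (Finset.mem_erase.mpr ⟨hzy, hz⟩)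
          have h2 : (Wj \ (B1 ∪ B2 ∪ B3)).card ≤ Wn.card + 1 :=
            le_trans (Finset.card_le_card h1) (Finset.card_insert_le _ _)
          have h3 : Wj.card ≤ (Wj \ (B1 ∪ B2 ∪ B3)).card + (B1 ∪ B2 ∪ B3).card :=
            Finset.card_le_card_sdiff_add_card
          have h4 : (B1 ∪ B2 ∪ B3).card ≤ 3 * (p + j) :=
            le_trans (Finset.card_union_le _ _)
              (by have := Finset.card_union_le B1 B2; omega)
          omega
        have haj : 3 * (p + j) + 1 ≤ a := by omega
        have : (j + 1) * a = j * a + a := by ring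
        omega
  obtain ⟨Ym, Wm, hYZ, hYc, -, -, hnc, -, -⟩ := key m le_rfl
  exact ⟨Ym, hYZ, hYc, hnc⟩

end Aux

/-- There is a function `h : ℕ × ℕ → ℕ` such that, for any 2-bounded coloring, normal set `A`,
ideal `I`, polychromatic `X ⊆ A` of size at most `p` with `A ∩ E(X) ∉ I`, and any
`Z ⊆ A ∩ E(X)` of size at least `h p n`, there is `Y ⊆ Z` of size at least `n` with
`X ∪ Y` polychromatic and `A ∩ E(X ∪ Y) ∉ I`. -/
theorem exists_h : ∃ h : ℕ → ℕ → ℕ,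
    ∀ (C : Type u) (χ : ℕ → ℕ → C), TwoBounded χ →
      ∀ A : Set ℕ, NormalFor χ A →
      ∀ I : Set (Set ℕ), IsIdeal I →
      ∀ (p n : ℕ) (X : Finset ℕ), ↑X ⊆ A → Polychromatic χ ↑X → X.card ≤ p →
        A ∩ EXT χ X ∉ I →
        ∀ Z : Finset ℕ, ↑Z ⊆ A ∩ EXT χ X → h p n ≤ Z.card →
          ∃ Y : Finset ℕ, Y ⊆ Z ∧ n ≤ Y.card ∧ Polychromatic χ ↑(X ∪ Y) ∧
            A ∩ EXT χ (X ∪ Y) ∉ I := by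
  classical
  refine ⟨fun p n => (n * (p + n + 2)) * (3 * (p + n * (p + n + 2)) + 1) + 1, ?_⟩
  intro C χ hχ A hA I hI p n X hXA hXpoly hXp hXE Z hZsub hZcard
  set m := n * (p + n + 2) with hm
  have hZA : ∀ z ∈ Z, z ∈ A := fun z hz => (hZsub hz).1
  have hZE : ∀ z ∈ Z, z ∈ EXT χ X := fun z hz => (hZsub hz).2
  obtain ⟨Y', hY'Z, hY'c, hY'nc⟩ := phase1 hχ X Z p m hXp (poly_noConf hXpoly)
    (fun z hz => ⟨(hZE z hz).1, poly_noConf (hZE z hz).2⟩) hZcard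
  have hY'A : ∀ y ∈ Y', y ∈ A := fun y hy => hZA y (hY'Z hy)
  have hY'X : ∀ y ∈ Y', y ∉ X := fun y hy => (hZE y (hY'Z hy)).1
  have key2 : ∀ k, k ≤ n → ∃ Yk Pk : Finset ℕ, Yk ⊆ Y' ∧ Yk.card = k ∧ Pk ⊆ Y' ∧
      (∀ z ∈ Pk, z ∉ X ∪ Yk) ∧ A ∩ EXT χ (X ∪ Yk) ∉ I ∧
      m ≤ Pk.card + k * (p + n + 1) := by
    intro k
    induction k with
    | zero =>
      intro _
      refine ⟨∅, Y', Finset.empty_subset _, rfl, le_refl _, ?_, ?_, by simp [hY'c]⟩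
      · intro z hz; simp [Finset.union_empty, hY'X z hz]
      · simpa [Finset.union_empty] using hXE
    | succ k ih =>
      intro hk1
      obtain ⟨Yk, Pk, hYY', hYc, hPY', hPdisj, hTk, hPc⟩ := ih (Nat.le_of_succ_le hk1)
      set T : Set ℕ := A ∩ EXT χ (X ∪ Yk) with hTdef
      set S : Finset ℕ := X ∪ Yk with hSdef
      have hSA : (↑S : Set ℕ) ⊆ A := by
        intro x hx
        rcases Finset.mem_union.mp (Finset.mem_coe.mp hx) with h | h
        · exact hXA h
        · exact hY'A x (hYY' h)
      have hSk : S.card ≤ p + k := le_trans (Finset.card_union_le _ _) (by omega)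
      set Bad := Pk.filter
        (fun y => (T \ ⋃ u ∈ (↑S : Set ℕ), Dset χ u y) ∈ I) with hBaddef
      have hBadcard : Bad.card ≤ S.card := by
        have hU : (⋃ y ∈ (↑Bad : Set ℕ), (T \ ⋃ u ∈ (↑S : Set ℕ), Dset χ u y)) ∈ I :=
          ideal_biUnion hI Bad _ (fun y hy => (Finset.mem_filter.mp hy).2)
        have hTne : ¬ T ⊆ ⋃ y ∈ (↑Bad : Set ℕ), (T \ ⋃ u ∈ (↑S : Set ℕ), Dset χ u y) :=
          fun hsub => hTk (hI.2.1 _ _ hsub hU)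
        obtain ⟨b, hbT, hbU⟩ := Set.not_subset.mp hTne
        have hsel : ∀ y ∈ Bad, ∃ u ∈ S, b ∈ Dset χ u y := by
          intro y hy
          have h1 : b ∉ T \ ⋃ u ∈ (↑S : Set ℕ), Dset χ u y :=
            fun hmem => hbU (Set.mem_biUnion (Finset.mem_coe.mpr hy) hmem)
          have h2 : b ∈ ⋃ u ∈ (↑S : Set ℕ), Dset χ u y := by
            by_contra h3
            exact h1 ⟨hbT, h3⟩
          obtain ⟨u, hu, hbD⟩ := Set.mem_iUnion₂.mp h2
          exact ⟨u, Finset.mem_coe.mp hu, hbD⟩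
        refine Finset.card_le_card_of_injOn
          (fun y => if h : ∃ u ∈ S, b ∈ Dset χ u y then h.choose else 0) ?_ ?_
        · intro y hy
          show (if h : ∃ u ∈ S, b ∈ Dset χ u y then h.choose else 0) ∈ S
          rw [dif_pos (hsel y hy)]
          exact (hsel y hy).choose_spec.1
        · intro y₁ hy₁ y₂ hy₂ hfeq
          simp only [Finset.mem_coe] at hy₁ hy₂
          replace hfeq : (if h : ∃ u ∈ S, b ∈ Dset χ u y₁ then h.choose else 0)
              = (if h : ∃ u ∈ S, b ∈ Dset χ u y₂ then h.choose else 0) := hfeq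
          rw [dif_pos (hsel y₁ hy₁), dif_pos (hsel y₂ hy₂)] at hfeq
          by_contra hne
          have hs1 := (hsel y₁ hy₁).choose_spec
          have hs2 := (hsel y₂ hy₂).choose_spec
          rw [hfeq] at hs1
          obtain ⟨hu1S, hu1b, hy1b, he1⟩ := hs1
          obtain ⟨hu2S, hu2b, hy2b, he2⟩ := hs2
          have hy1S : y₁ ∉ S := hPdisj y₁ (Finset.mem_of_mem_filter _ hy₁)
          have hy2S : y₂ ∉ S := hPdisj y₂ (Finset.mem_of_mem_filter _ hy₂)
          refine three_pairs hχ (a := (hsel y₂ hy₂).choose) (b := y₁) (c := y₂) ?_ ?_ hne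
            hu2b hy1b hy2b he1.symm he2.symm
          · intro h; exact hy1S (h ▸ hu2S)
          · intro h; exact hy2S (h ▸ hu2S)
      have hBadPk : Bad ⊆ Pk := Finset.filter_subset _ _
      have hkn : k < n := hk1
      have hstep : Bad.card + 1 ≤ Pk.card := by
        have e1 : m = n * (p + n + 1) + n := by rw [hm]; ring
        have e2 : k * (p + n + 1) + (p + n + 1) ≤ n * (p + n + 1) := by
          have h5 : k + 1 ≤ n := hk1
          calc k * (p + n + 1) + (p + n + 1) = (k + 1) * (p + n + 1) := by ring
            _ ≤ n * (p + n + 1) := Nat.mul_le_mul_right _ h5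
        omega
      have hPBne : (Pk \ Bad).Nonempty := by
        rw [← Finset.card_pos]
        have := Finset.le_card_sdiff Bad Pk
        omega
      obtain ⟨y, hy⟩ := hPBne
      obtain ⟨hyP, hyBad⟩ := Finset.mem_sdiff.mp hy
      have hgood : (T \ ⋃ u ∈ (↑S : Set ℕ), Dset χ u y) ∉ I := by
        intro h
        exact hyBad (Finset.mem_filter.mpr ⟨hyP, h⟩)
      have hyY' : y ∈ Y' := hPY' hyP
      have hyS : y ∉ S := hPdisj y hyP
      have hyYk : y ∉ Yk := fun h => hyS (Finset.mem_union_right _ h)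
      set S' : Finset ℕ := X ∪ insert y Yk with hS'def
      have hS'A : (↑S' : Set ℕ) ⊆ A := by
        intro x hx
        rcases Finset.mem_union.mp (Finset.mem_coe.mp hx) with h | h
        · exact hXA h
        · rcases Finset.mem_insert.mp h with rfl | h
          · exact hY'A x hyY'
          · exact hY'A x (hYY' h)
      have hS'Y' : S' ⊆ X ∪ Y' := by
        apply Finset.union_subset_union_right
        exact Finset.insert_subset hyY' hYY'
      set F : Set ℕ := (↑S' : Set ℕ) ∪ ⋃ c ∈ (↑S' : Set ℕ), ⋃ w ∈ (↑S' : Set ℕ),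
        {b | b ≠ w ∧ b < c ∧ w < c ∧ χ b c = χ w c} with hFdef
      have hFfin : F.Finite := by
        apply Set.Finite.union (S'.finite_toSet)
        apply Set.Finite.biUnion (S'.finite_toSet)
        intro c _
        apply Set.Finite.biUnion (S'.finite_toSet)
        intro w _
        apply Set.Subsingleton.finite
        intro b₁ hb₁ b₂ hb₂
        obtain ⟨h1w, h1c, hwc, he1⟩ := hb₁
        obtain ⟨h2w, h2c, -, he2⟩ := hb₂
        by_contra hne
        exact three_pairs hχ (fun h => h1w h.symm) (fun h => h2w h.symm) hne hwc h1c h2c he1 he2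
      have hF : F ∈ I := hI.1 F hFfin
      set G : Set ℕ := (T \ ⋃ u ∈ (↑S : Set ℕ), Dset χ u y) \ F with hGdef
      have hG : G ∉ I := by
        intro hGI
        apply hgood
        apply hI.2.1 _ (G ∪ F) _ (hI.2.2.1 _ _ hGI hF)
        intro x hx
        by_cases hxF : x ∈ F
        · exact Or.inr hxF
        · exact Or.inl ⟨hx, hxF⟩
      have hGsub : G ⊆ A ∩ EXT χ S' := by
        intro b hb
        obtain ⟨⟨⟨hbA, hbE⟩, hbD⟩, hbF⟩ := hb
        obtain ⟨hbX, hbpoly⟩ := hbE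
        have hbS' : b ∉ S' := by
          intro h
          exact hbF (Or.inl (Finset.mem_coe.mpr h))
        have hbF2 : ∀ cc ∈ S', ∀ ww ∈ S', b ≠ ww → b < cc → ww < cc → χ b cc ≠ χ ww cc := by
          intro cc hcc ww hww h1 h2 h3 h4
          apply hbF
          refine Or.inr (Set.mem_biUnion (Finset.mem_coe.mpr hcc) ?_)
          exact Set.mem_biUnion (Finset.mem_coe.mpr hww) ⟨h1, h2, h3, h4⟩
        have hbnD : ∀ u ∈ S, b ∉ Dset χ u y := by
          intro u hu hmem
          exact hbD (Set.mem_biUnion (Finset.mem_coe.mpr hu) hmem)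
        refine ⟨hbA, hbS', ?_⟩
        apply noConf_poly hA
        · intro x hx
          rcases hx with hx | rfl
          · exact hS'A hx
          · exact hbA
        have Hb : NoConf χ (↑S ∪ {b}) := poly_noConf hbpoly
        have HY' : NoConf χ (↑S' : Set ℕ) := by
          apply noConf_mono _ hY'nc
          exact Finset.coe_subset.mpr hS'Y'
        intro α γ β hα hγ hβ hαβ hγβ heq
        rcases hβ with hβ | rfl
        · rcases hα with hα | rfl
          · rcases hγ with hγ | rfl
            · exact HY' α γ β hα hγ hβ hαβ hγβ heq
            · exact absurd (hbF2 β (Finset.mem_coe.mp hβ) α (Finset.mem_coe.mp hα)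
                (fun h => hbS' (h ▸ (Finset.mem_coe.mp hα))) hγβ hαβ heq.symm) not_false
          · rcases hγ with hγ | rfl
            · exact absurd (hbF2 β (Finset.mem_coe.mp hβ) γ (Finset.mem_coe.mp hγ)
                (fun h => hbS' (h ▸ (Finset.mem_coe.mp hγ))) hαβ hγβ heq) not_false
            · rfl
        · rcases hα with hα | rfl
          · rcases hγ with hγ | rfl
            · -- α, γ ∈ S' , β = b
              have hα' := Finset.mem_coe.mp hα
              have hγ' := Finset.mem_coe.mp hγ
              rw [hS'def] at hα' hγ'
              rcases Finset.mem_union.mp hα' with hαX | hαI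
              · rcases Finset.mem_union.mp hγ' with hγX | hγI
                · exact Hb α γ β (Or.inl (Finset.mem_coe.mpr (Finset.mem_union_left _ hαX)))
                    (Or.inl (Finset.mem_coe.mpr (Finset.mem_union_left _ hγX)))
                    (Or.inr rfl) hαβ hγβ heq
                · rcases Finset.mem_insert.mp hγI with rfl | hγk
                  · exact absurd (hbnD α (Finset.mem_union_left _ hαX) ⟨hαβ, hγβ, heq⟩) not_false
                  · exact Hb α γ β (Or.inl (Finset.mem_coe.mpr (Finset.mem_union_left _ hαX)))
                      (Or.inl (Finset.mem_coe.mpr (Finset.mem_union_right _ hγk)))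
                      (Or.inr rfl) hαβ hγβ heq
              · rcases Finset.mem_insert.mp hαI with rfl | hαk
                · rcases Finset.mem_union.mp hγ' with hγX | hγI
                  · exact absurd (hbnD γ (Finset.mem_union_left _ hγX) ⟨hγβ, hαβ, heq.symm⟩)
                      not_false
                  · rcases Finset.mem_insert.mp hγI with rfl | hγk
                    · rfl
                    · exact absurd (hbnD γ (Finset.mem_union_right _ hγk) ⟨hγβ, hαβ, heq.symm⟩)
                        not_false
                · rcases Finset.mem_union.mp hγ' with hγX | hγI
                  · exact Hb α γ β (Or.inl (Finset.mem_coe.mpr (Finset.mem_union_right _ hαk)))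
                      (Or.inl (Finset.mem_coe.mpr (Finset.mem_union_left _ hγX)))
                      (Or.inr rfl) hαβ hγβ heq
                  · rcases Finset.mem_insert.mp hγI with rfl | hγk
                    · exact absurd (hbnD α (Finset.mem_union_right _ hαk) ⟨hαβ, hγβ, heq⟩)
                        not_false
                    · exact Hb α γ β (Or.inl (Finset.mem_coe.mpr (Finset.mem_union_right _ hαk)))
                        (Or.inl (Finset.mem_coe.mpr (Finset.mem_union_right _ hγk)))
                        (Or.inr rfl) hαβ hγβ heq
            · exact absurd hγβ (lt_irrefl _)
          · exact absurd hαβ (lt_irrefl _)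
      have hT' : A ∩ EXT χ S' ∉ I := fun h => hG (hI.2.1 G _ hGsub h)
      refine ⟨insert y Yk, (Pk \ Bad).erase y, ?_, ?_, ?_, ?_, hT', ?_⟩
      · exact Finset.insert_subset hyY' hYY'
      · rw [Finset.card_insert_of_notMem hyYk, hYc]
      · exact ((Finset.erase_subset _ _).trans Finset.sdiff_subset).trans hPY'
      · intro z hz
        obtain ⟨hzy, hz'⟩ := Finset.mem_erase.mp hz
        have hzP : z ∈ Pk := Finset.sdiff_subset hz'
        have hzS : z ∉ S := hPdisj z hzP
        rw [Finset.union_insert, Finset.mem_insert]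
        push_neg
        exact ⟨hzy, hzS⟩
      · have h1 : ((Pk \ Bad).erase y).card + 1 + Bad.card ≥ Pk.card := by
          have ha1 := Finset.pred_card_le_card_erase (s := Pk \ Bad) (a := y)
          have ha2 := Finset.le_card_sdiff Bad Pk
          omega
        have e3 : (k + 1) * (p + n + 1) = k * (p + n + 1) + (p + n + 1) := by ring
        omega
  obtain ⟨Y, P, hYY', hYc, -, -, hTn, -⟩ := key2 n le_rfl
  refine ⟨Y, fun x hx => hY'Z (hYY' hx), le_of_eq hYc.symm, ?_, hTn⟩
  apply noConf_poly hA
  · intro x hx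
    rcases Finset.mem_union.mp (Finset.mem_coe.mp hx) with h | h
    · exact hXA h
    · exact hY'A x (hYY' h)
  · exact noConf_mono (Finset.coe_subset.mpr (Finset.union_subset_union_right hYY')) hY'nc
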